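/- Let F be a field of characteristic ≠ 2, let A be a commutative algebra over F, let B be a commutative algebra, and let (M, M*) be a Jordan elementary function from A to B with M bijective and M* surjective (i.e., M(aM*(x) + M*(x)a) = M(a)x + xM(a) and M*(M(a)x + xM(a)) = aM*(x) + M*(x)a for all a ∈ A, x ∈ B). Then the function f(x₁,...,x_k) := M⁻¹(M(x₁+⋯+x_k) − M(x₁) − ⋯ − M(x_k)) is a nullifying function on A (with r = 1, using operators L_t which satisfy L_t f(s₁,...,s_k) = f(L_t s₁, ..., L_t s_k)). -/
import Mathlib


/-- Composite of left multiplications: `Lmul [t₁,…,t_r] x = t₁ * (t₂ * (⋯ * (t_r * x)))`. -/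
def Lmul {A : Type*} [Mul A] (ts : List A) (x : A) : A := ts.foldr (· * ·) x

/-- A nullifying function on the nonempty finite sequences of `A`, with associated
positive integer `r` for axiom (V). -/
def IsNullifying {A : Type*} [NonUnitalNonAssocCommRing A] (f : List A → A) (r : ℕ) : Prop :=
  0 < r ∧
  -- (I) permutation invariance
  (∀ l l' : List A, l.Perm l' → f l = f l') ∧
  -- (II)
  (∀ s t : List A, s ≠ [] → t ≠ [] → (f (s ++ [t.sum]) = f (s ++ t) ↔ f t = 0)) ∧
  -- (III)
  (∀ x : A, f [x] = 0) ∧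
  -- (IV)
  (∀ s : List A, s ≠ [] → f (s ++ [(0 : A)]) = f s) ∧
  -- (V)
  (∀ ts : List A, ts.length = r → ∀ l : List A, Lmul ts (f l) = f (l.map (Lmul ts)))

/-- if `(M, M*)` is a Jordan elementary function from a commutative
algebra `A` over a field of characteristic `≠ 2` to a commutative algebra `B`, with `M`
bijective and `M*` surjective, then the deviation-from-additivity function of `M` is a
nullifying function on `A` with `r = 1`. -/
theorem jordanElementary_nullifying {F A B : Type*} [Field F]
    [NonUnitalNonAssocCommRing A] [Module F A] [SMulCommClass F A A] [IsScalarTower F A A]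
    [NonUnitalNonAssocCommRing B]
    (h2 : (2 : F) ≠ 0)
    (M : A → B) (Ms : B → A) (hM : Function.Bijective M) (hMs : Function.Surjective Ms)
    (hj1 : ∀ a : A, ∀ x : B, M (a * Ms x + Ms x * a) = M a * x + x * M a)
    (hj2 : ∀ a : A, ∀ x : B, Ms (M a * x + x * M a) = a * Ms x + Ms x * a) :
    IsNullifying (fun l : List A => Function.invFun M (M l.sum - (l.map M).sum)) 1 := by
  set g := Function.invFun M with hg
  have hMg : ∀ y, M (g y) = y := Function.rightInverse_invFun hM.surjective
  have hgM : ∀ a, g (M a) = a := Function.leftInverse_invFun hM.injective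
  have hM0 : M 0 = 0 := by have := hj1 0 0; simpa using this
  have hg0 : g 0 = 0 := by rw [← hM0, hgM]
  have hginj : Function.Injective g := fun x y h => by rw [← hMg x, ← hMg y, h]
  have hgz : ∀ y, g y = 0 ↔ y = 0 := fun y =>
    ⟨fun h => by rw [← hMg y, h, hM0], fun h => h ▸ hg0⟩
  have key : ∀ t : A, ∃ u : B, ∀ s : A, M (t * s) = u * M s + M s * u := by
    intro t
    obtain ⟨u, hu⟩ := hMs ((2⁻¹ : F) • t)
    refine ⟨u, fun s => ?_⟩
    have h := hj1 s u
    rw [hu, mul_smul_comm, smul_mul_assoc, mul_comm s t, ← add_smul] at h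
    have h1 : (2⁻¹ + 2⁻¹ : F) = 1 := by rw [← two_mul]; exact mul_inv_cancel₀ h2
    rw [h1, one_smul] at h
    rw [h, add_comm]
  refine ⟨one_pos, ?_, ?_, ?_, ?_, ?_⟩
  · intro l l' hp
    simp only
    rw [hp.sum_eq, (hp.map M).sum_eq]
  · intro s t _ _
    simp only [List.sum_append, List.map_append, List.map_cons, List.map_nil,
      List.sum_cons, List.sum_nil, add_zero]
    rw [hginj.eq_iff, hgz, sub_eq_zero]
    constructor
    · intro h
      exact add_left_cancel (sub_right_injective h)
    · intro h
      rw [h]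
  · intro x
    simp only [List.sum_cons, List.sum_nil, add_zero, List.map_cons, List.map_nil,
      sub_self, hg0]
  · intro s _
    simp only [List.sum_append, List.map_append, List.map_cons, List.map_nil,
      List.sum_cons, List.sum_nil, add_zero, hM0]
  · intro ts hts l
    obtain ⟨t, rfl⟩ := List.length_eq_one_iff.mp hts
    obtain ⟨u, hu⟩ := key t
    have hL : Lmul [t] = fun x : A => t * x := rfl
    have hsum1 : ∀ m : List A, (m.map (fun x => t * x)).sum = t * m.sum := by
      intro m
      induction m with
      | nil => simp
      | cons a m ih => simp [ih, mul_add]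
    have hsum2 : ∀ m : List A,
        ((m.map (fun x => t * x)).map M).sum = u * (m.map M).sum + (m.map M).sum * u := by
      intro m
      induction m with
      | nil => simp
      | cons a m ih =>
        simp only [List.map_cons, List.sum_cons, ih, hu, mul_add, add_mul]
        abel
    apply hM.injective
    simp only [hL]
    rw [hu, hMg, hMg, hsum1, hsum2, hu]
    rw [mul_sub, sub_mul]
    abel
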